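/- arXiv:1403.3999 — 4 statements merged into one kernel-verified Lean document; each statement's English description precedes it below -/
import Mathlib

section
/- Let Q ≥ 0, H ≥ 0, R > 0, and A, B be real constants. Then the scalar Riccati differential equation P'(t) + 2A·P(t) − B²R⁻¹·P(t)² + Q = 0 on [0,T] with terminal condition P(T) = H admits a unique solution P : [0,T] → ℝ, and this solution satisfies P(t) ≥ 0 for all t ∈ [0,T]. -/
/-!
Reversing time, `w τ = P (T - τ)` solves `w' = 2 A w - c w² + Q`, `w 0 = H`, with
`c = B² / R ≥ 0`. The substitution `w = N / D` linearizes this to `N' = A N + Q D`,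
`D' = c N - A D`, which is solved by hyperbolic functions of `d τ`, `d = √(A² + c Q)`.
Writing `cosh (d τ) = exp (-d τ) + sinh (d τ)` exhibits `N` and `D` as sums of nonnegative terms
for `τ ≥ 0`, since `d ≥ |A|`; hence `D > 0`, and the solution exists on all of `[0, T]` and is
nonnegative. Uniqueness holds because the right-hand side is locally Lipschitz, hence Lipschitz
on the compact range of any two solutions.
-/

open Set Real

theorem ODE_solution_unique_of_mem_Icc_left_of_locallyLipschitz {E : Type*}
    [NormedAddCommGroup E] [NormedSpace ℝ E] {v : E → E} (hv : LocallyLipschitz v)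
    {f g : ℝ → E} {a b : ℝ}
    (hf : ContinuousOn f (Icc a b))
    (hf' : ∀ t ∈ Ioc a b, HasDerivWithinAt f (v (f t)) (Icc a b) t)
    (hg : ContinuousOn g (Icc a b))
    (hg' : ∀ t ∈ Ioc a b, HasDerivWithinAt g (v (g t)) (Icc a b) t)
    (hb : f b = g b) : EqOn f g (Icc a b) := by
  set s := f '' Icc a b ∪ g '' Icc a b
  obtain ⟨K, hK⟩ := hv.locallyLipschitzOn.exists_lipschitzOnWith_of_compact
    ((isCompact_Icc.image_of_continuousOn hf).union (isCompact_Icc.image_of_continuousOn hg))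
  exact ODE_solution_unique_of_mem_Icc_left (v := fun _ ↦ v) (s := fun _ ↦ s) (fun _ _ ↦ hK)
    hf (fun t ht ↦ (hf' t ht).mono_of_mem_nhdsWithin (Icc_mem_nhdsLE_of_mem ht))
    (fun t ht ↦ .inl (mem_image_of_mem f (Ioc_subset_Icc_self ht)))
    hg (fun t ht ↦ (hg' t ht).mono_of_mem_nhdsWithin (Icc_mem_nhdsLE_of_mem ht))
    (fun t ht ↦ .inr (mem_image_of_mem g (Ioc_subset_Icc_self ht))) hb

theorem HasDerivAt.div_of_riccati_linearization {a c q τ : ℝ} {N D : ℝ → ℝ}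
    (hN : HasDerivAt N (a * N τ + q * D τ) τ) (hD : HasDerivAt D (c * N τ - a * D τ) τ)
    (hD₀ : D τ ≠ 0) :
    HasDerivAt (fun τ ↦ N τ / D τ) (2 * a * (N τ / D τ) - c * (N τ / D τ) ^ 2 + q) τ := by
  refine (hN.div hD hD₀).congr_deriv ?_
  field_simp
  ring

/-- `sinh (d τ) / d`, extended by its limit `τ` at `d = 0`, so that the degenerate case
`A² + c Q = 0` needs no separate formula. -/
noncomputable def sinhDiv (d τ : ℝ) : ℝ := if d = 0 then τ else sinh (d * τ) / d

theorem hasDerivAt_sinhDiv (d τ : ℝ) : HasDerivAt (sinhDiv d) (cosh (d * τ)) τ := by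
  unfold sinhDiv
  split_ifs with hd
  · simpa [hd] using hasDerivAt_id' τ
  · refine (((hasDerivAt_id' τ).const_mul d).sinh.div_const d).congr_deriv ?_
    field_simp

theorem hasDerivAt_cosh_mul (d τ : ℝ) :
    HasDerivAt (fun τ ↦ cosh (d * τ)) (d ^ 2 * sinhDiv d τ) τ := by
  refine ((hasDerivAt_id' τ).const_mul d).cosh.congr_deriv ?_
  unfold sinhDiv
  split_ifs with hd
  · simp [hd]
  · field_simp

theorem cosh_mul_sub_mul_sinhDiv (d τ : ℝ) :
    cosh (d * τ) - d * sinhDiv d τ = exp (-(d * τ)) := by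
  unfold sinhDiv
  split_ifs with hd
  · simp [hd]
  · rw [mul_div_cancel₀ _ hd, cosh_sub_sinh]

theorem sinhDiv_nonneg {d τ : ℝ} (hd : 0 ≤ d) (hτ : 0 ≤ τ) : 0 ≤ sinhDiv d τ := by
  unfold sinhDiv
  split_ifs
  · exact hτ
  · exact div_nonneg (sinh_nonneg_iff.mpr (mul_nonneg hd hτ)) hd

section Linearization

variable (A c Q H d : ℝ)

/-- For `d² = A² + c Q`, `riccatiNum / riccatiDen` solves `w' = 2 A w - c w² + Q`, `w 0 = H`. -/
noncomputable def riccatiNum (τ : ℝ) : ℝ := H * cosh (d * τ) + (A * H + Q) * sinhDiv d τ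

noncomputable def riccatiDen (τ : ℝ) : ℝ := cosh (d * τ) + (c * H - A) * sinhDiv d τ

variable {A c Q H d}

theorem hasDerivAt_riccatiNum (hd : d ^ 2 = A ^ 2 + c * Q) (τ : ℝ) :
    HasDerivAt (riccatiNum A Q H d)
      (A * riccatiNum A Q H d τ + Q * riccatiDen A c H d τ) τ := by
  refine (((hasDerivAt_cosh_mul d τ).const_mul H).add
    ((hasDerivAt_sinhDiv d τ).const_mul (A * H + Q))).congr_deriv ?_
  simp only [riccatiNum, riccatiDen]
  linear_combination H * sinhDiv d τ * hd

theorem hasDerivAt_riccatiDen (hd : d ^ 2 = A ^ 2 + c * Q) (τ : ℝ) :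
    HasDerivAt (riccatiDen A c H d)
      (c * riccatiNum A Q H d τ - A * riccatiDen A c H d τ) τ := by
  refine ((hasDerivAt_cosh_mul d τ).add
    ((hasDerivAt_sinhDiv d τ).const_mul (c * H - A))).congr_deriv ?_
  simp only [riccatiNum, riccatiDen]
  linear_combination sinhDiv d τ * hd

theorem riccatiNum_nonneg (hQ : 0 ≤ Q) (hH : 0 ≤ H) (hAd : |A| ≤ d) {τ : ℝ}
    (hτ : 0 ≤ τ) :
    0 ≤ riccatiNum A Q H d τ := by
  have hS := sinhDiv_nonneg ((abs_nonneg A).trans hAd) hτ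
  have hAd' : 0 ≤ d + A := by linarith [neg_abs_le A]
  have hexp : riccatiNum A Q H d τ =
      H * exp (-(d * τ)) + (H * (d + A) + Q) * sinhDiv d τ := by
    rw [← cosh_mul_sub_mul_sinhDiv, riccatiNum]; ring
  rw [hexp]
  positivity

theorem riccatiDen_pos (hcH : 0 ≤ c * H) (hAd : |A| ≤ d) {τ : ℝ} (hτ : 0 ≤ τ) :
    0 < riccatiDen A c H d τ := by
  have hS := sinhDiv_nonneg ((abs_nonneg A).trans hAd) hτ
  have hAd' : 0 ≤ d - A := by linarith [le_abs_self A]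
  have hexp : riccatiDen A c H d τ = exp (-(d * τ)) + (c * H + (d - A)) * sinhDiv d τ := by
    rw [← cosh_mul_sub_mul_sinhDiv, riccatiDen]; ring
  rw [hexp]
  positivity

end Linearization

theorem exists_riccati_terminal_nonneg {A c Q H : ℝ} (T : ℝ) (hc : 0 ≤ c) (hQ : 0 ≤ Q)
    (hH : 0 ≤ H) :
    ∃ P : ℝ → ℝ, P T = H ∧
      ∀ t ≤ T, HasDerivAt P (-(2 * A * P t) + c * P t ^ 2 - Q) t ∧ 0 ≤ P t := by
  set d := √(A ^ 2 + c * Q)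
  have hd : d ^ 2 = A ^ 2 + c * Q := sq_sqrt (by positivity)
  have hAd : |A| ≤ d := abs_le_sqrt (by nlinarith [mul_nonneg hc hQ])
  set w := fun τ ↦ riccatiNum A Q H d τ / riccatiDen A c H d τ
  refine ⟨fun t ↦ w (T - t), by simp [w, riccatiNum, riccatiDen, sinhDiv],
    fun t ht ↦ ⟨?_, ?_⟩⟩
  · have hτ : 0 ≤ T - t := sub_nonneg.mpr ht
    have hw := (hasDerivAt_riccatiNum hd (T - t)).div_of_riccati_linearization
      (hasDerivAt_riccatiDen hd (T - t)) (riccatiDen_pos (mul_nonneg hc hH) hAd hτ).ne'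
    refine (hw.comp t ((hasDerivAt_id' t).const_sub T)).congr_deriv ?_
    ring
  · exact div_nonneg (riccatiNum_nonneg hQ hH hAd (sub_nonneg.mpr ht))
      (riccatiDen_pos (mul_nonneg hc hH) hAd (sub_nonneg.mpr ht)).le

theorem stmt_0_general (T A B R Q H : ℝ) (hQ : 0 ≤ Q) (hH : 0 ≤ H) (hR : 0 < R) :
    ∃ P : ℝ → ℝ,
      (ContinuousOn P (Icc 0 T) ∧
        (∀ t ∈ Icc 0 T,
          HasDerivWithinAt P (-(2 * A * P t) + B ^ 2 * R⁻¹ * (P t) ^ 2 - Q) (Icc 0 T) t) ∧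
        P T = H) ∧
      (∀ t ∈ Icc 0 T, 0 ≤ P t) ∧
      (∀ P' : ℝ → ℝ,
        (ContinuousOn P' (Icc 0 T) ∧
          (∀ t ∈ Icc 0 T,
            HasDerivWithinAt P' (-(2 * A * P' t) + B ^ 2 * R⁻¹ * (P' t) ^ 2 - Q) (Icc 0 T) t) ∧
          P' T = H) → EqOn P' P (Icc 0 T)) := by
  obtain ⟨P, hPT, hP⟩ :=
    exists_riccati_terminal_nonneg (A := A) T (by positivity : 0 ≤ B ^ 2 * R⁻¹) hQ hH
  have hP' : ∀ t ∈ Icc 0 T,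
      HasDerivWithinAt P (-(2 * A * P t) + B ^ 2 * R⁻¹ * (P t) ^ 2 - Q) (Icc 0 T) t :=
    fun t ht ↦ (hP t ht.2).1.hasDerivWithinAt
  have hPc : ContinuousOn P (Icc 0 T) := fun t ht ↦ (hP t ht.2).1.continuousAt.continuousWithinAt
  refine ⟨P, ⟨hPc, hP', hPT⟩, fun t ht ↦ (hP t ht.2).2, ?_⟩
  rintro P' ⟨hP'c, hP'', hP'T⟩
  have hv : LocallyLipschitz fun x : ℝ ↦ -(2 * A * x) + B ^ 2 * R⁻¹ * x ^ 2 - Q :=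
    (by fun_prop : ContDiff ℝ 1 _).locallyLipschitz
  exact ODE_solution_unique_of_mem_Icc_left_of_locallyLipschitz hv hP'c
    (fun t ht ↦ hP'' t (Ioc_subset_Icc_self ht)) hPc (fun t ht ↦ hP' t (Ioc_subset_Icc_self ht))
    (hP'T.trans hPT.symm)

/-- Riccati equation: existence, uniqueness (among continuous solutions on [0,T]),
and nonnegativity of the solution. -/
theorem stmt_0 (T A B R Q H : ℝ) (hT : 0 < T) (hQ : 0 ≤ Q) (hH : 0 ≤ H) (hR : 0 < R) :
    ∃ P : ℝ → ℝ,
      (ContinuousOn P (Icc 0 T) ∧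
        (∀ t ∈ Icc 0 T,
          HasDerivWithinAt P (-(2 * A * P t) + B ^ 2 * R⁻¹ * (P t) ^ 2 - Q) (Icc 0 T) t) ∧
        P T = H) ∧
      (∀ t ∈ Icc 0 T, 0 ≤ P t) ∧
      (∀ P' : ℝ → ℝ,
        (ContinuousOn P' (Icc 0 T) ∧
          (∀ t ∈ Icc 0 T,
            HasDerivWithinAt P' (-(2 * A * P' t) + B ^ 2 * R⁻¹ * (P' t) ^ 2 - Q) (Icc 0 T) t) ∧
          P' T = H) → EqOn P' P (Icc 0 T)) :=
  stmt_0_general T A B R Q H hQ hH hR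
end

section
/- Let A, B, R, Q, H, T be real constants with R > 0, and let P be the nonnegative solution of the Riccati equation P' + 2AP − B²R⁻¹P² + Q = 0, P(T) = H. For given continuous functions x̄, x̂₀ : [0,T] → ℝ, suppose (p, f) solves the affine terminal-value ODE f'(t) = (−A + B²R⁻¹P(t))·f(t) + (Q − D·P(t))·x̄(t) − α·P(t)·x̂₀(t), f(T) = 0, and x̂ solves x̂'(t) = A·x̂(t) − B²R⁻¹·(P(t)·x̂(t) + f(t)) + D·x̄(t) + α·x̂₀(t) with x̂(0) = x₀. Then p(t) := P(t)·x̂(t) + f(t) solves the adjoint terminal-value problem p'(t) = −A·p(t) − Q·(x̂(t) − x̄(t)), p(T) = H·x̂(T). -/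
/-! By the product rule, `(P x̂ + f)' = P' x̂ + P x̂' + f'`. The Riccati term `B²R⁻¹P² x̂` of `P' x̂`
cancels the feedback term of `P x̂'`, and the forcing terms `D x̄`, `α x̂₀` of `P x̂'` cancel those
of `f'`; what is left is `-A (P x̂ + f) - Q (x̂ - x̄)`. -/

open Set

theorem hasDerivAt_riccati_decoupling {P f xhat : ℝ → ℝ} {t A B R Q D α xbar xhat0 : ℝ}
    (hP : HasDerivAt P (-(2 * A * P t) + B ^ 2 * R⁻¹ * (P t) ^ 2 - Q) t)
    (hf : HasDerivAt f ((-A + B ^ 2 * R⁻¹ * P t) * f t + (Q - D * P t) * xbar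
      - α * P t * xhat0) t)
    (hxhat : HasDerivAt xhat (A * xhat t - B ^ 2 * R⁻¹ * (P t * xhat t + f t)
      + D * xbar + α * xhat0) t) :
    HasDerivAt (fun s => P s * xhat s + f s)
      (-(A * (P t * xhat t + f t)) - Q * (xhat t - xbar)) t :=
  ((hP.mul hxhat).add hf).congr_deriv (by ring)

theorem stmt_5_general (T A B R Q H D α : ℝ)
    (P f xhat xbar xhat0 : ℝ → ℝ)
    (hP : ∀ t ∈ Icc 0 T,
      HasDerivAt P (-(2 * A * P t) + B ^ 2 * R⁻¹ * (P t) ^ 2 - Q) t)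
    (hPT : P T = H)
    (hf : ∀ t ∈ Icc 0 T,
      HasDerivAt f ((-A + B ^ 2 * R⁻¹ * P t) * f t + (Q - D * P t) * xbar t
        - α * P t * xhat0 t) t)
    (hfT : f T = 0)
    (hxhat : ∀ t ∈ Icc 0 T,
      HasDerivAt xhat (A * xhat t - B ^ 2 * R⁻¹ * (P t * xhat t + f t)
        + D * xbar t + α * xhat0 t) t) :
    (∀ t ∈ Icc 0 T,
      HasDerivAt (fun s => P s * xhat s + f s)
        (-(A * (P t * xhat t + f t)) - Q * (xhat t - xbar t)) t) ∧
      P T * xhat T + f T = H * xhat T :=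
  ⟨fun t ht => hasDerivAt_riccati_decoupling (hP t ht) (hf t ht) (hxhat t ht),
    by rw [hPT, hfT, add_zero]⟩

/-- Decoupling ansatz `p = P·x̂ + f` for the minor player's Hamiltonian system
(deterministic version of Lemma 3.3): it solves the adjoint terminal-value problem. -/
theorem stmt_5 (T A B R Q H D α x₀ : ℝ) (hT : 0 < T) (hR : 0 < R)
    (P f xhat xbar xhat0 : ℝ → ℝ)
    (hxbar : Continuous xbar) (hxhat0 : Continuous xhat0)
    (hP : ∀ t ∈ Icc 0 T,
      HasDerivAt P (-(2 * A * P t) + B ^ 2 * R⁻¹ * (P t) ^ 2 - Q) t)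
    (hPT : P T = H) (hPnn : ∀ t ∈ Icc 0 T, 0 ≤ P t)
    (hf : ∀ t ∈ Icc 0 T,
      HasDerivAt f ((-A + B ^ 2 * R⁻¹ * P t) * f t + (Q - D * P t) * xbar t
        - α * P t * xhat0 t) t)
    (hfT : f T = 0)
    (hxhat : ∀ t ∈ Icc 0 T,
      HasDerivAt xhat (A * xhat t - B ^ 2 * R⁻¹ * (P t * xhat t + f t)
        + D * xbar t + α * xhat0 t) t)
    (hx0 : xhat 0 = x₀) :
    (∀ t ∈ Icc 0 T,
      HasDerivAt (fun s => P s * xhat s + f s)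
        (-(A * (P t * xhat t + f t)) - Q * (xhat t - xbar t)) t) ∧
      P T * xhat T + f T = H * xhat T :=
  stmt_5_general T A B R Q H D α P f xhat xbar xhat0 hP hPT hf hfT hxhat
end

section
/- Let P : [0,T] → ℝ be the solution of P' + 2AP − B²R⁻¹P² + Q = 0, P(T) = H with Q ≥ 0, H ≥ 0, R > 0. Then P is bounded on [0,T]: there exists M ≥ 0 (depending only on A, B, R, Q, H, T) with 0 ≤ P(t) ≤ M for all t ∈ [0,T]. -/
/-!
On `[0,T]` the solution is bounded by compactness, say `|P| ≤ K`. Where `P < 0` the Riccati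
equation gives `P' ≤ -L P` with `L = 2|A| + B²K/R`, so `exp (L t) P t` is nonincreasing on every
interval where `P` is negative. Running this backwards from a negative value to the first zero
after it contradicts `P T = H ≥ 0`.
-/

open Set

theorem nonneg_on_Icc_of_hasDerivAt_nonpos_of_neg {g g' : ℝ → ℝ} {a b : ℝ}
    (hg : ContinuousOn g (Icc a b)) (hg' : ∀ x ∈ Ioo a b, HasDerivAt g (g' x) x)
    (hneg : ∀ x ∈ Ioo a b, g x < 0 → g' x ≤ 0) (hb : 0 ≤ g b) :
    ∀ t ∈ Icc a b, 0 ≤ g t := by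
  intro t ht
  by_contra! hgt
  have hcont : ContinuousOn g (Icc t b) := hg.mono (Icc_subset_Icc ht.1 le_rfl)
  set Z := Icc t b ∩ g ⁻¹' {0}
  have hZ_closed : IsClosed Z := hcont.preimage_isClosed_of_isClosed isClosed_Icc isClosed_singleton
  have hZ_ne : Z.Nonempty := intermediate_value_Icc ht.2 hcont ⟨hgt.le, hb⟩
  obtain ⟨s, ⟨hs, hgs : g s = 0⟩, hs_least⟩ :=
    (isCompact_Icc.of_isClosed_subset hZ_closed inter_subset_left).exists_isLeast hZ_ne
  have hneg_before : ∀ x ∈ Ico t s, g x < 0 := by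
    intro x hx
    by_contra! hgx
    have hxb : x ≤ b := hx.2.le.trans hs.2
    obtain ⟨v, hv, hgv⟩ :=
      intermediate_value_Icc hx.1 (hg.mono (Icc_subset_Icc ht.1 hxb)) ⟨hgt.le, hgx⟩
    linarith [hs_least ⟨⟨hv.1, hv.2.trans hxb⟩, hgv⟩, hv.2, hx.2]
  have hIoo : ∀ x ∈ Ioo t s, x ∈ Ioo a b := fun x hx => ⟨ht.1.trans_lt hx.1, hx.2.trans_le hs.2⟩
  have hanti : AntitoneOn g (Icc t s) := by
    refine antitoneOn_of_hasDerivWithinAt_nonpos (f' := g') (convex_Icc t s)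
      (hg.mono (Icc_subset_Icc ht.1 hs.2)) (fun x hx => ?_) (fun x hx => ?_) <;>
      simp only [interior_Icc] at hx ⊢
    · exact (hg' x (hIoo x hx)).hasDerivWithinAt
    · exact hneg x (hIoo x hx) (hneg_before x (Ioo_subset_Ico_self hx))
  have hts : t ≤ s := hs.1
  linarith [hanti (left_mem_Icc.2 hts) (right_mem_Icc.2 hts) hts]

theorem nonneg_on_Icc_of_hasDerivAt_le_neg_mul {f f' : ℝ → ℝ} {a b L : ℝ}
    (hf : ContinuousOn f (Icc a b)) (hf' : ∀ x ∈ Ioo a b, HasDerivAt f (f' x) x)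
    (hbound : ∀ x ∈ Ioo a b, f x < 0 → f' x ≤ -(L * f x)) (hb : 0 ≤ f b) :
    ∀ t ∈ Icc a b, 0 ≤ f t := by
  have hexp : ∀ x, HasDerivAt (fun y => Real.exp (L * y)) (Real.exp (L * x) * L) x := fun x => by
    simpa using ((hasDerivAt_id x).const_mul L).exp
  have hweighted := nonneg_on_Icc_of_hasDerivAt_nonpos_of_neg (g := fun x => Real.exp (L * x) * f x)
    ((Real.continuous_exp.comp (continuous_const_mul L)).continuousOn.mul hf)
    (fun x hx => (hexp x).mul (hf' x hx))
    (fun x hx hgx => by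
      have hfx : f x < 0 := neg_of_mul_neg_right hgx (Real.exp_pos _).le
      have := hbound x hx hfx
      calc Real.exp (L * x) * L * f x + Real.exp (L * x) * f' x
          = Real.exp (L * x) * (f' x + L * f x) := by ring
        _ ≤ 0 := mul_nonpos_of_nonneg_of_nonpos (Real.exp_pos _).le (by linarith))
    (mul_nonneg (Real.exp_pos _).le hb)
  exact fun t ht => nonneg_of_mul_nonneg_right (hweighted t ht) (Real.exp_pos _)

theorem riccati_rhs_le_of_neg {A c Q K p : ℝ} (hc : 0 ≤ c) (hQ : 0 ≤ Q) (hp : p < 0)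
    (hK : -K ≤ p) : -(2 * A * p) + c * p ^ 2 - Q ≤ -((2 * |A| + c * K) * p) := by
  have hA : 0 ≤ (|A| - A) * -p := mul_nonneg (sub_nonneg.2 (le_abs_self A)) (by linarith)
  have hsq : 0 ≤ c * (-p * (K + p)) := mul_nonneg hc (mul_nonneg (by linarith) (by linarith))
  nlinarith

theorem stmt_6_general (T A B R Q H : ℝ) (hQ : 0 ≤ Q) (hH : 0 ≤ H) (hR : 0 < R)
    (P : ℝ → ℝ) (hPcont : ContinuousOn P (Icc 0 T))
    (hP : ∀ t ∈ Icc 0 T,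
      HasDerivWithinAt P (-(2 * A * P t) + B ^ 2 * R⁻¹ * (P t) ^ 2 - Q) (Icc 0 T) t)
    (hPT : P T = H) :
    ∃ M : ℝ, 0 ≤ M ∧ ∀ t ∈ Icc 0 T, 0 ≤ P t ∧ P t ≤ M := by
  obtain ⟨K, hK⟩ := isCompact_Icc.exists_bound_of_continuousOn hPcont
  have hnonneg : ∀ t ∈ Icc 0 T, 0 ≤ P t :=
    nonneg_on_Icc_of_hasDerivAt_le_neg_mul (L := 2 * |A| + B ^ 2 * R⁻¹ * K) hPcont
      (fun x hx => (hP x (Ioo_subset_Icc_self hx)).hasDerivAt (Icc_mem_nhds hx.1 hx.2))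
      (fun x hx hPx => riccati_rhs_le_of_neg (by positivity) hQ hPx
        (neg_le_of_abs_le ((Real.norm_eq_abs _).symm.trans_le (hK x (Ioo_subset_Icc_self hx)))))
      (hPT ▸ hH)
  exact ⟨max K 0, le_max_right _ _, fun t ht =>
    ⟨hnonneg t ht, (le_abs_self _).trans ((hK t ht).trans (le_max_left _ _))⟩⟩

/-- The solution of the scalar Riccati equation with `Q ≥ 0`, `H ≥ 0`, `R > 0`
is nonnegative and bounded on `[0,T]`. -/
theorem stmt_6 (T A B R Q H : ℝ) (hT : 0 < T) (hQ : 0 ≤ Q) (hH : 0 ≤ H) (hR : 0 < R)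
    (P : ℝ → ℝ) (hPcont : ContinuousOn P (Icc 0 T))
    (hP : ∀ t ∈ Icc 0 T,
      HasDerivWithinAt P (-(2 * A * P t) + B ^ 2 * R⁻¹ * (P t) ^ 2 - Q) (Icc 0 T) t)
    (hPT : P T = H) :
    ∃ M : ℝ, 0 ≤ M ∧ ∀ t ∈ Icc 0 T, 0 ≤ P t ∧ P t ≤ M :=
  stmt_6_general T A B R Q H hQ hH hR P hPcont hP hPT
end

section
/- Consider the forward linear system on [0,T]: for i = 1, …, N, x_i'(t) = (A − B²R⁻¹P(t))·x_i(t) − B²R⁻¹f(t) + D·x^{(N)}(t) + α·x₀(t), and the limit equation x̄'(t) = (A + D − B²R⁻¹P(t))·x̄(t) − B²R⁻¹f(t) + α·x₀(t), with x̄(0) = lim_{N→∞} (1/N)∑ x_i(0) (assumed to exist). If the initial averages converge, (1/N)∑_{i=1}^N x_i(0) → x̄(0), then for every t ∈ [0,T] the state averages converge: x^{(N)}(t) → x̄(t) as N → ∞, uniformly on [0,T]. -/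
open Set Filter

/-!
The mean `m_N = (1/N) ∑ x_i` of the closed-loop states solves exactly the limit equation,
because the coupling term `D m_N` is linear in the states. Hence `m_N - x̄` solves the linear
homogeneous equation `e' = (A + D - B²R⁻¹P) e`, and Grönwall's inequality bounds it on `[0,T]`
by `e^{KT} |m_N(0) - x̄(0)|`, where `K` bounds the continuous coefficient on `[0,T]`.
-/

theorem hasDerivAt_mean_of_meanField {ι : Type*} [Fintype ι] [Nonempty ι]
    {x : ι → ℝ → ℝ} {a b D t : ℝ}
    (hx : ∀ i, HasDerivAt (x i)
      (a * x i t + D * ((Fintype.card ι : ℝ)⁻¹ * ∑ j, x j t) + b) t) :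
    HasDerivAt (fun s => (Fintype.card ι : ℝ)⁻¹ * ∑ j, x j s)
      ((a + D) * ((Fintype.card ι : ℝ)⁻¹ * ∑ j, x j t) + b) t := by
  have hcard : (Fintype.card ι : ℝ) ≠ 0 := Nat.cast_ne_zero.mpr Fintype.card_ne_zero
  refine ((HasDerivAt.fun_sum fun i _ => hx i).const_mul _).congr_deriv ?_
  simp only [Finset.sum_add_distrib, Finset.sum_const, Finset.card_univ, nsmul_eq_mul,
    ← Finset.mul_sum]
  field_simp

theorem norm_le_mul_exp_of_hasDerivAt_smul {E : Type*} [NormedAddCommGroup E]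
    [NormedSpace ℝ E] {e : ℝ → E} {g : ℝ → ℝ} {K a b : ℝ}
    (he : ∀ s ∈ Icc a b, HasDerivAt e (g s • e s) s) (hg : ∀ s ∈ Icc a b, |g s| ≤ K) :
    ∀ t ∈ Icc a b, ‖e t‖ ≤ ‖e a‖ * Real.exp (K * (t - a)) := by
  intro t ht
  have hbound := norm_le_gronwallBound_of_norm_deriv_right_le (ε := 0)
    (fun s hs => (he s hs).continuousAt.continuousWithinAt)
    (fun s hs => (he s (Ico_subset_Icc_self hs)).hasDerivWithinAt) le_rfl
    (fun s hs => by
      rw [norm_smul, add_zero, Real.norm_eq_abs]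
      exact mul_le_mul_of_nonneg_right (hg s (Ico_subset_Icc_self hs)) (norm_nonneg _))
    t ht
  rwa [gronwallBound_ε0] at hbound

theorem tendstoUniformlyOn_of_dist_le {ι α β : Type*} [PseudoMetricSpace β] {p : Filter ι}
    {F : ι → α → β} {f : α → β} {s : Set α} {u : ι → ℝ}
    (hu : Tendsto u p (nhds 0)) (hFf : ∀ᶠ n in p, ∀ x ∈ s, dist (f x) (F n x) ≤ u n) :
    TendstoUniformlyOn F f p s := by
  rw [Metric.tendstoUniformlyOn_iff]
  intro ε hε
  filter_upwards [hFf, hu.eventually (gt_mem_nhds hε)] with n hn hun x hx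
  exact (hn x hx).trans_lt hun

theorem stmt_17_general (T A B D R α : ℝ)
    (P f x₀ : ℝ → ℝ) (hP : Continuous P)
    (x : (N : ℕ) → Fin N → ℝ → ℝ) (xbar : ℝ → ℝ)
    (hx : ∀ N : ℕ, 1 ≤ N → ∀ i : Fin N, ∀ t ∈ Icc 0 T,
      HasDerivAt (x N i)
        ((A - B ^ 2 * R⁻¹ * P t) * x N i t - B ^ 2 * R⁻¹ * f t
          + D * ((1 / (N : ℝ)) * ∑ j, x N j t) + α * x₀ t) t)
    (hxbar : ∀ t ∈ Icc 0 T,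
      HasDerivAt xbar
        ((A + D - B ^ 2 * R⁻¹ * P t) * xbar t - B ^ 2 * R⁻¹ * f t + α * x₀ t) t)
    (hinit : Tendsto (fun N : ℕ => (1 / (N : ℝ)) * ∑ j, x N j 0) atTop (nhds (xbar 0))) :
    TendstoUniformlyOn (fun (N : ℕ) (t : ℝ) => (1 / (N : ℝ)) * ∑ j, x N j t)
      xbar atTop (Icc 0 T) := by
  set m := fun (N : ℕ) (t : ℝ) => (1 / (N : ℝ)) * ∑ j, x N j t
  obtain ⟨K, hK⟩ := isCompact_Icc.exists_bound_of_continuousOn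
    (f := fun t => A + D - B ^ 2 * R⁻¹ * P t) (by fun_prop)
  have hm : ∀ N, 1 ≤ N → ∀ t ∈ Icc 0 T, HasDerivAt (m N)
      ((A + D - B ^ 2 * R⁻¹ * P t) * m N t - B ^ 2 * R⁻¹ * f t + α * x₀ t) t := by
    intro N hN t ht
    have : Nonempty (Fin N) := ⟨⟨0, hN⟩⟩
    have := hasDerivAt_mean_of_meanField (x := x N) (a := A - B ^ 2 * R⁻¹ * P t)
      (b := α * x₀ t - B ^ 2 * R⁻¹ * f t) (D := D) (t := t) fun i =>
        (hx N hN i t ht).congr_deriv (by rw [Fintype.card_fin]; ring)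
    simp only [Fintype.card_fin, ← one_div] at this
    convert this using 1
    ring
  have hm0 : Tendsto (fun N => dist (xbar 0) (m N 0) * Real.exp (K * T)) atTop (nhds 0) := by
    simpa [m] using ((tendsto_const_nhds (x := xbar 0)).dist hinit).mul_const (Real.exp (K * T))
  refine tendstoUniformlyOn_of_dist_le hm0 ?_
  filter_upwards [eventually_ge_atTop 1] with N hN t ht
  have hgron := norm_le_mul_exp_of_hasDerivAt_smul (e := fun s => xbar s - m N s)
    (fun s hs => ((hxbar s hs).sub (hm N hN s hs)).congr_deriv (by simp only [smul_eq_mul]; ring))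
    (fun s hs => (Real.norm_eq_abs _).symm.trans_le (hK s hs)) t ht
  have hK0 : 0 ≤ K := (norm_nonneg _).trans (hK t ht)
  rw [← dist_eq_norm, ← dist_eq_norm, sub_zero] at hgron
  exact hgron.trans (mul_le_mul_of_nonneg_left
    (Real.exp_le_exp.mpr (mul_le_mul_of_nonneg_left ht.2 hK0)) dist_nonneg)

/-- Consistency step identifying the mean-field limit equation: if the initial averages
converge, the state averages of the closed-loop system converge to the limit trajectory,
uniformly on [0,T]. -/
theorem stmt_17 (T A B D R α : ℝ) (hT : 0 < T) (hR : 0 < R)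
    (P f x₀ : ℝ → ℝ) (hP : Continuous P) (hf : Continuous f) (hx₀ : Continuous x₀)
    (x : (N : ℕ) → Fin N → ℝ → ℝ) (xbar : ℝ → ℝ)
    (hx : ∀ N : ℕ, 1 ≤ N → ∀ i : Fin N, ∀ t ∈ Icc 0 T,
      HasDerivAt (x N i)
        ((A - B ^ 2 * R⁻¹ * P t) * x N i t - B ^ 2 * R⁻¹ * f t
          + D * ((1 / (N : ℝ)) * ∑ j, x N j t) + α * x₀ t) t)
    (hxbar : ∀ t ∈ Icc 0 T,
      HasDerivAt xbar
        ((A + D - B ^ 2 * R⁻¹ * P t) * xbar t - B ^ 2 * R⁻¹ * f t + α * x₀ t) t)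
    (hinit : Tendsto (fun N : ℕ => (1 / (N : ℝ)) * ∑ j, x N j 0) atTop (nhds (xbar 0))) :
    TendstoUniformlyOn (fun (N : ℕ) (t : ℝ) => (1 / (N : ℝ)) * ∑ j, x N j t)
      xbar atTop (Icc 0 T) :=
  stmt_17_general T A B D R α P f x₀ hP x xbar hx hxbar hinit
end
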